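/- arXiv:2303.15368 — 3 statements merged into one kernel-verified Lean document; each statement's English description precedes it below -/
import Mathlib

section
/- Let s > 0, t₀ > 0, and let f : [0, ∞) → [0, ∞) be continuous, with f strictly decreasing on [0, t₀], f(t₀) = 0, and f strictly increasing on [t₀, ∞). Then the function w(t) = e^{-s f(t)}/(1 + e^{-s f(t)})² attains its global maximum on [0, ∞) exactly at t = t₀. -/
/-- Unbiasedness: if the unsigned distance `f ≥ 0` is continuous, strictly decreasing on
`[0,t₀]` with `f t₀ = 0`, and strictly increasing on `[t₀,∞)`, then the weight
`w(t) = e^{-s f(t)}/(1+e^{-s f(t)})²` attains its global maximum on `[0,∞)` exactly at `t₀`. -/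
theorem stmt3 (s t₀ : ℝ) (hs : 0 < s) (ht₀ : 0 < t₀)
    (f : ℝ → ℝ) (hfc : ContinuousOn f (Set.Ici 0))
    (hfnonneg : ∀ t ∈ Set.Ici (0:ℝ), 0 ≤ f t)
    (hdec : StrictAntiOn f (Set.Icc 0 t₀))
    (hzero : f t₀ = 0)
    (hinc : StrictMonoOn f (Set.Ici t₀))
    (w : ℝ → ℝ)
    (hw : ∀ t, w t = Real.exp (-s * f t) / (1 + Real.exp (-s * f t)) ^ 2) :
    ∀ t ∈ Set.Ici (0:ℝ), t ≠ t₀ → w t < w t₀ := by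
  intro t ht hne
  have hft : 0 < f t := by
    rcases lt_or_gt_of_ne hne with h | h
    · have := hdec ⟨ht, le_of_lt h⟩ ⟨le_of_lt ht₀, le_refl t₀⟩ h
      linarith [hzero]
    · have := hinc (Set.mem_Ici.mpr le_rfl) (Set.mem_Ici.mpr h.le) h
      linarith [hzero]
  rw [hw t, hw t₀, hzero]
  set u := Real.exp (-s * f t) with hu
  have hu0 : 0 < u := Real.exp_pos _
  have hu1 : u < 1 := by
    rw [hu]
    apply Real.exp_lt_one_iff.mpr
    have := mul_pos hs hft
    linarith
  have h4 : u / (1 + u) ^ 2 < 1 / 4 := by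
    rw [div_lt_div_iff₀ (by positivity) (by norm_num)]
    nlinarith [sq_nonneg (1 - u)]
  rw [mul_zero, Real.exp_zero]
  norm_num at h4 ⊢
  linarith
end

section
/- Fix s > 0, c > 1, and an angle θ with cos θ < 0 and c > −cos θ. Consider a ray for which f(t) satisfies df/dt = cos θ < 0 for t before the hit (linear planar case). Then the weight w(t) = T(t)·σ̂(t), where σ̂(t) = c·s·e^{-s f(t)}/(1+e^{-s f(t)}) and T(t) = exp(−∫₀ᵗ σ̂(u) du), attains its maximum at the parameter t* where f(t*) = (1/s)·ln(−c/cos θ), and this value is strictly positive. -/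
/-!
Put `x(t) = exp (-s f(t))` and `k = -c / cos θ > 1`. Since `f` is linear with slope `cos θ`,
`σ̂ = k · d/dt log (1 + x)`, hence `T = ((1 + x(0)) / (1 + x))^k` and
`w = c s (1 + x(0))^k · x / (1 + x)^(k+1)`. By Bernoulli's inequality, `x / (1 + x)^(k+1)`
is maximal over `x ≥ 0` at `x = 1/k`, i.e. where `f = (1/s) log k`, and `log k > 0`.
-/

open Real

lemma div_one_add_rpow_le {k x : ℝ} (hk : 0 < k) (hx : 0 ≤ x) :
    x / (1 + x) ^ (k + 1) ≤ k⁻¹ / (1 + k⁻¹) ^ (k + 1) := by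
  have ha : 0 < 1 + k⁻¹ := by positivity
  have hy : 0 ≤ (1 + x) / (1 + k⁻¹) := by positivity
  -- Bernoulli for `y = (1 + x) / (1 + k⁻¹)` and exponent `k + 1`: `y ^ (k + 1) ≥ k x`.
  have bernoulli := one_add_mul_self_le_rpow_one_add
    (s := (1 + x) / (1 + k⁻¹) - 1) (by linarith) (by linarith : (1 : ℝ) ≤ k + 1)
  have hkx : 1 + (k + 1) * ((1 + x) / (1 + k⁻¹) - 1) = k * x := by
    field_simp; ring
  rw [add_sub_cancel, hkx, div_rpow (by positivity) ha.le] at bernoulli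
  rw [div_le_div_iff₀ (by positivity) (by positivity)]
  rw [le_div_iff₀ (by positivity)] at bernoulli
  calc x * (1 + k⁻¹) ^ (k + 1) = k⁻¹ * (k * x * (1 + k⁻¹) ^ (k + 1)) := by field_simp
    _ ≤ k⁻¹ * (1 + x) ^ (k + 1) := by gcongr

lemma integral_deriv_mul_exp_div_one_add_exp {g g' : ℝ → ℝ}
    (hg : ∀ u, HasDerivAt g (g' u) u) (hg' : Continuous g') (a b : ℝ) :
    ∫ u in a..b, g' u * exp (g u) / (1 + exp (g u))
      = log (1 + exp (g b)) - log (1 + exp (g a)) := by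
  have hgc : Continuous g := continuous_iff_continuousAt.2 fun u => (hg u).continuousAt
  refine intervalIntegral.integral_eq_sub_of_hasDerivAt
    (f := fun u => log (1 + exp (g u))) (fun u _ => ?_) ?_
  · exact ((((hg u).exp).const_add 1).log (by positivity)).congr_deriv (by ring)
  · refine (Continuous.div (by fun_prop) (by fun_prop) fun u => ?_).intervalIntegrable a b
    positivity

lemma exp_neg_mul_log_sub_log_mul_div {A B : ℝ} (hA : 0 < A) (hB : 0 < B) (k y : ℝ) :
    exp (-(k * (log B - log A))) * (y / B) = A ^ k * (y / B ^ (k + 1)) := by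
  rw [rpow_add_one hB.ne', rpow_def_of_pos hA, rpow_def_of_pos hB,
    show -(k * (log B - log A)) = log A * k - log B * k by ring, exp_sub]
  field_simp

theorem stmt5_general (s c θ : ℝ) (hs : 0 < s)
    (hcθ : Real.cos θ < 0) (hcc : -Real.cos θ < c)
    (f : ℝ → ℝ) (hf : ∀ t, f t = f 0 + t * Real.cos θ)
    (σ T w : ℝ → ℝ)
    (hσ : ∀ t, σ t = c * s * Real.exp (-s * f t) / (1 + Real.exp (-s * f t)))
    (hT : ∀ t, T t = Real.exp (-(∫ u in (0:ℝ)..t, σ u)))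
    (hw : ∀ t, w t = T t * σ t)
    (tstar : ℝ)
    (htstar : f tstar = (1 / s) * Real.log (-c / Real.cos θ)) :
    0 < f tstar ∧
    ∀ t ∈ Set.Icc (0:ℝ) (-(f 0) / Real.cos θ), w t ≤ w tstar := by
  set k := -c / cos θ with hk_def
  have hk : 1 < k := by rw [hk_def, lt_div_iff_of_neg hcθ]; linarith
  set x : ℝ → ℝ := fun t => exp (-s * f t) with hx_def
  have hexp_deriv : ∀ u, HasDerivAt (fun t => -s * f t) (-s * cos θ) u := fun u => by
    rw [funext hf]
    simpa using (((hasDerivAt_id u).mul_const (cos θ)).const_add (f 0)).const_mul (-s)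
  have hx : ∀ t, 0 < 1 + x t := fun t => by positivity
  have hσx : ∀ t, σ t = c * s * x t / (1 + x t) := hσ
  have hσk : ∀ u, σ u = k * (-s * cos θ * x u / (1 + x u)) := fun u => by
    rw [hσx u, hk_def]
    field_simp [hcθ.ne]
  have hσ_integral :
      ∀ t, ∫ u in (0:ℝ)..t, σ u = k * (log (1 + x t) - log (1 + x 0)) := fun t => by
    simp only [hσk, intervalIntegral.integral_const_mul, hx_def,
      integral_deriv_mul_exp_div_one_add_exp hexp_deriv continuous_const]
  have hw_closed : ∀ t, w t = c * s * (1 + x 0) ^ k * (x t / (1 + x t) ^ (k + 1)) := fun t => by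
    rw [hw, hT, hσ_integral, hσx, exp_neg_mul_log_sub_log_mul_div (hx 0) (hx t)]
    ring
  have hxstar : x tstar = k⁻¹ := by
    change exp (-s * f tstar) = k⁻¹
    rw [htstar, ← mul_assoc, neg_mul, mul_one_div_cancel hs.ne', neg_one_mul, exp_neg,
      exp_log (by linarith)]
  refine ⟨?_, fun t _ => ?_⟩
  · rw [htstar]
    exact mul_pos (by positivity) (log_pos hk)
  · rw [hw_closed t, hw_closed tstar, hxstar]
    have hC : 0 ≤ c * s * (1 + x 0) ^ k :=
      mul_nonneg (by nlinarith) (rpow_nonneg (hx 0).le k)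
    exact mul_le_mul_of_nonneg_left (div_one_add_rpow_le (by linarith) (exp_pos _).le) hC

/-- Bias of the modified density: with `f` linear, `f'(t) = cos θ < 0`, `c > 1`,
`c > -cos θ`, the weight `w = T·σ̂` with `σ̂(t) = c s e^{-s f(t)}/(1+e^{-s f(t)})` and
`T(t) = exp(-∫₀ᵗ σ̂)` attains its maximum over the segment before the hit at the
parameter `t*` with `f(t*) = (1/s)·ln(-c/cos θ)`, and this distance value is positive. -/
theorem stmt5 (s c θ : ℝ) (hs : 0 < s) (hc : 1 < c)
    (hcθ : Real.cos θ < 0) (hcc : -Real.cos θ < c)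
    (f : ℝ → ℝ) (hf : ∀ t, f t = f 0 + t * Real.cos θ) (hf0 : 0 < f 0)
    (σ T w : ℝ → ℝ)
    (hσ : ∀ t, σ t = c * s * Real.exp (-s * f t) / (1 + Real.exp (-s * f t)))
    (hT : ∀ t, T t = Real.exp (-(∫ u in (0:ℝ)..t, σ u)))
    (hw : ∀ t, w t = T t * σ t)
    (tstar : ℝ)
    (htstar : f tstar = (1 / s) * Real.log (-c / Real.cos θ))
    (hmem : tstar ∈ Set.Icc 0 (-(f 0) / Real.cos θ)) :
    0 < f tstar ∧
    ∀ t ∈ Set.Icc (0:ℝ) (-(f 0) / Real.cos θ), w t ≤ w tstar :=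
  stmt5_general s c θ hs hcθ hcc f hf σ T w hσ hT hw tstar htstar
end

section
/- Fix s > 0, c > 1, and suppose f(t) = f(0) + t·cos θ with cos θ < 0 (linear decrease before the hit at t₀ = −f(0)/cos θ). Then the transparency for the modified density σ̂(t) = c·s·e^{-s f(t)}/(1+e^{-s f(t)}) is T(t) = ((1 + e^{-s f(0)})/(1 + e^{-s f(t)}))^{c/|cos θ|} for 0 ≤ t ≤ t₀. -/
/-- Closed-form transparency for the modified density in the linear planar case:
with `f(t) = f(0) + t·cos θ`, `cos θ < 0`, the transparency of
`σ̂(t) = c s e^{-s f(t)}/(1+e^{-s f(t)})` is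
`T(t) = ((1+e^{-s f(0)})/(1+e^{-s f(t)}))^{c/|cos θ|}` for `0 ≤ t ≤ t₀ = -f(0)/cos θ`. -/
theorem stmt15 (s c θ : ℝ) (hs : 0 < s) (hc : 1 < c)
    (hcθ : Real.cos θ < 0)
    (f : ℝ → ℝ) (hf : ∀ t, f t = f 0 + t * Real.cos θ) (hf0 : 0 < f 0)
    (σ : ℝ → ℝ)
    (hσ : ∀ t, σ t = c * s * Real.exp (-s * f t) / (1 + Real.exp (-s * f t))) :
    ∀ t ∈ Set.Icc (0:ℝ) (-(f 0) / Real.cos θ),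
      Real.exp (-(∫ u in (0:ℝ)..t, σ u)) =
        ((1 + Real.exp (-s * f 0)) / (1 + Real.exp (-s * f t)))
          ^ (c / |Real.cos θ|) := by
  intro t ht
  set k : ℝ := c / (-Real.cos θ) with hk
  set g : ℝ → ℝ := fun u => k * Real.log (1 + Real.exp (-s * (f 0 + u * Real.cos θ))) with hg
  have hpos : ∀ u : ℝ, (0:ℝ) < 1 + Real.exp (-s * (f 0 + u * Real.cos θ)) := fun u =>
    by positivity
  have hderiv : ∀ u : ℝ, HasDerivAt g (σ u) u := by
    intro u
    have h1 : HasDerivAt (fun u : ℝ => -s * (f 0 + u * Real.cos θ))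
        (-s * Real.cos θ) u := by
      have := (hasDerivAt_id u).mul_const (Real.cos θ)
      have := (this.const_add (f 0)).const_mul (-s)
      simpa using this
    have h2 : HasDerivAt (fun u : ℝ => 1 + Real.exp (-s * (f 0 + u * Real.cos θ)))
        (Real.exp (-s * (f 0 + u * Real.cos θ)) * (-s * Real.cos θ)) u :=
      ((h1.exp).const_add 1)
    have h3 := (h2.log (ne_of_gt (hpos u))).const_mul k
    have heq : k * (Real.exp (-s * (f 0 + u * Real.cos θ)) * (-s * Real.cos θ) /
        (1 + Real.exp (-s * (f 0 + u * Real.cos θ)))) = σ u := by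
      rw [hσ u, hf u, hk]
      have hθ : Real.cos θ ≠ 0 := ne_of_lt hcθ
      field_simp
    rw [heq] at h3
    exact h3
  have hcont : ContinuousOn σ (Set.uIcc 0 t) := by
    have : Continuous σ := by
      have : Continuous fun u => c * s * Real.exp (-s * f u) / (1 + Real.exp (-s * f u)) := by
        have hfc : Continuous f := by
          have h : Continuous fun u : ℝ => f 0 + u * Real.cos θ :=
            continuous_const.add (continuous_id.mul continuous_const)
          exact h.congr fun u => (hf u).symm
        have he : Continuous fun u => Real.exp (-s * f u) :=
          Real.continuous_exp.comp (continuous_const.mul hfc)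
        exact (continuous_const.mul he).div (continuous_const.add he) (fun u => by
          rw [hf u]; exact ne_of_gt (hpos u))
      exact this.congr fun u => (hσ u).symm
    exact this.continuousOn
  have hint : (∫ u in (0:ℝ)..t, σ u) = g t - g 0 :=
    intervalIntegral.integral_eq_sub_of_hasDerivAt (fun u _ => hderiv u)
      (hcont.intervalIntegrable)
  rw [hint]
  have hAt : (0:ℝ) < 1 + Real.exp (-s * f t) := by positivity
  have hA0 : (0:ℝ) < 1 + Real.exp (-s * f 0) := by positivity
  have habs : |Real.cos θ| = -Real.cos θ := abs_of_neg hcθ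
  rw [Real.rpow_def_of_pos (div_pos hA0 hAt), habs]
  congr 1
  have hft : f t = f 0 + t * Real.cos θ := hf t
  have hf00 : f 0 = f 0 + 0 * Real.cos θ := by ring
  simp only [hg, hk]
  rw [Real.log_div (ne_of_gt hA0) (ne_of_gt hAt), ← hft, ← hf00]
  ring
end
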